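/- (Total approximation error of TD(λ) under bounded cost manipulation.) Let P ∈ ℝ^{n×n} be row-stochastic with stationary distribution π, D = diag(π), α ∈ (0,1), λ ∈ [0,1), and let Φ ∈ ℝ^{n×K} have linearly independent columns. Define M := (1−λ) Σ_{m=0}^∞ λ^m α^{m+1} P^{m+1}, A := Φᵀ D (M − I) Φ, b(c) := Φᵀ D Σ_{m=0}^∞ (αλ)^m P^m c, Π := Φ(Φᵀ D Φ)^{-1} Φᵀ D, and J^μ := (I − α P)^{-1} ḡ. Let g̃ ∈ ℝ^n be the manipulated cost vector and η := g̃ − ḡ. If r* and r̃* satisfy A r* + b(ḡ) = 0 and A r̃* + b(g̃) = 0, then ‖Φ r̃* − J^μ‖_D ≤ (1/(1−α)) · ‖η‖_D + ((1−λα)/√((1−α)(1+α−2λα))) · ‖(Π − I) J^μ‖_D. -/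

import Mathlib

open Matrix

/-!
The map `x ↦ (√(π i) * x i)ᵢ` identifies `‖·‖_D` with a Euclidean norm, in which
`Π = Φ (Φᵀ D Φ)⁻¹ Φᵀ D` is the orthogonal projection onto the range of `Φ`. Stationarity of `π`
and Jensen's inequality row by row make `P` nonexpansive, so `S = ∑ (αλ)^m P^m = (I - αλP)⁻¹`
has norm at most `1/(1 - αλ)` and `M = (1 - λ) α S P` contracts with modulus
`β = (1 - λ) α / (1 - αλ)`. The equation `A r + b c = 0` says `Φ r = Π (M Φ r + S c)`, while
`J^μ = M J^μ + S ḡ`. Now split `Φ r̃* - J^μ = e + v` with `e = Φ r̃* - Φ r*` and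
`v = Φ r* - J^μ`. From `e = Π (M e + S η)` we get `‖e‖ ≤ ‖η‖ / ((1 - αλ)(1 - β)) = ‖η‖ / (1 - α)`.
And `v = Π M v + (Π - I) J^μ` is an orthogonal decomposition, so Pythagoras gives
`(1 - β²) ‖v‖² ≤ ‖(Π - I) J^μ‖²`, where `1 / √(1 - β²) = (1 - λα) / √((1 - α)(1 + α - 2λα))`.
-/

noncomputable def normD {n : ℕ} (pi : Fin n → ℝ) (J : Fin n → ℝ) : ℝ :=
  Real.sqrt (∑ i, pi i * (J i) ^ 2)

namespace Matrix

variable {ι : Type*} [Fintype ι] [DecidableEq ι] {P : Matrix ι ι ℝ} {c : ℝ}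

noncomputable def geomSeries (P : Matrix ι ι ℝ) (c : ℝ) : Matrix ι ι ℝ :=
  ∑' m : ℕ, c ^ m • P ^ m

theorem summable_smul_pow_of_mem_rowStochastic (hP : P ∈ rowStochastic ℝ ι) (hc0 : 0 ≤ c)
    (hc1 : c < 1) : Summable fun m : ℕ => c ^ m • P ^ m := by
  refine Pi.summable.2 fun i => Pi.summable.2 fun j => ?_
  refine (summable_geometric_of_lt_one hc0 hc1).of_nonneg_of_le (fun m => ?_) (fun m => ?_) <;>
    rw [smul_apply, smul_eq_mul]
  · exact mul_nonneg (pow_nonneg hc0 m) (nonneg_of_mem_rowStochastic (pow_mem hP m))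
  · exact mul_le_of_le_one_right (pow_nonneg hc0 m) (le_one_of_mem_rowStochastic (pow_mem hP m))

theorem geomSeries_mul_one_sub_smul (hP : P ∈ rowStochastic ℝ ι) (hc0 : 0 ≤ c) (hc1 : c < 1) :
    geomSeries P c * (1 - c • P) = 1 := by
  have hs : Summable ((c • P) ^ ·) := by
    simpa only [smul_pow] using summable_smul_pow_of_mem_rowStochastic hP hc0 hc1
  simpa only [geomSeries, smul_pow] using hs.tsum_pow_mul_one_sub

theorem one_sub_smul_mul_geomSeries (hP : P ∈ rowStochastic ℝ ι) (hc0 : 0 ≤ c) (hc1 : c < 1) :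
    (1 - c • P) * geomSeries P c = 1 := by
  have hs : Summable ((c • P) ^ ·) := by
    simpa only [smul_pow] using summable_smul_pow_of_mem_rowStochastic hP hc0 hc1
  simpa only [geomSeries, smul_pow] using hs.one_sub_mul_tsum_pow

theorem tsum_pow_mul_pow_succ_smul_pow_succ {α lam : ℝ}
    (hs : Summable fun m : ℕ => (α * lam) ^ m • P ^ m) :
    ∑' m : ℕ, (lam ^ m * α ^ (m + 1)) • P ^ (m + 1) = α • (geomSeries P (α * lam) * P) := by
  rw [geomSeries, ← hs.tsum_mul_right, ← (hs.mul_right P).tsum_const_smul]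
  refine tsum_congr fun m => ?_
  rw [smul_mul_assoc, ← pow_succ, smul_smul, mul_pow]
  ring_nf

end Matrix

theorem smul_mul_add_mul_one_sub_smul {R : Type*} [Ring R] [Algebra ℝ R] {S P : R} {α lam : ℝ}
    (hS : S * (1 - (α * lam) • P) = 1) :
    ((1 - lam) * α) • (S * P) + S * (1 - α • P) = 1 := by
  rw [mul_sub, mul_one, mul_smul_comm] at hS
  rw [mul_sub, mul_one, mul_smul_comm, ← hS]
  module

section WeightedNorm

variable {n : ℕ} (pi : Fin n → ℝ)

noncomputable def weightedEmbedding : (Fin n → ℝ) →ₗ[ℝ] EuclideanSpace ℝ (Fin n) where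
  toFun x := WithLp.toLp 2 fun i => √(pi i) * x i
  map_add' x y := by ext i; simp only [Pi.add_apply, mul_add, PiLp.add_apply]
  map_smul' c x := by
    ext i
    simp only [Pi.smul_apply, smul_eq_mul, Real.ringHom_apply, PiLp.smul_apply]
    ring

variable {pi}

theorem normD_eq_norm_weightedEmbedding (hpi : ∀ i, 0 ≤ pi i) (x : Fin n → ℝ) :
    normD pi x = ‖weightedEmbedding pi x‖ := by
  simp [normD, EuclideanSpace.norm_eq, weightedEmbedding, mul_pow, Real.sq_sqrt (hpi _)]

theorem inner_weightedEmbedding (hpi : ∀ i, 0 ≤ pi i) (x y : Fin n → ℝ) :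
    inner ℝ (weightedEmbedding pi x) (weightedEmbedding pi y) = x ⬝ᵥ (diagonal pi *ᵥ y) := by
  simp only [weightedEmbedding, LinearMap.coe_mk, AddHom.coe_mk, PiLp.inner_apply,
    mulVec_diagonal, dotProduct]
  refine Finset.sum_congr rfl fun i _ => ?_
  rw [RCLike.inner_apply', conj_trivial]
  linear_combination (x i * y i) * Real.mul_self_sqrt (hpi i)

theorem normD_add_le (hpi : ∀ i, 0 ≤ pi i) (x y : Fin n → ℝ) :
    normD pi (x + y) ≤ normD pi x + normD pi y := by
  simp only [normD_eq_norm_weightedEmbedding hpi, map_add]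
  exact norm_add_le _ _

theorem normD_smul (hpi : ∀ i, 0 ≤ pi i) (c : ℝ) (x : Fin n → ℝ) :
    normD pi (c • x) = |c| * normD pi x := by
  simp only [normD_eq_norm_weightedEmbedding hpi, map_smul, norm_smul, Real.norm_eq_abs]

theorem normD_mulVec_le_of_mem_rowStochastic {P : Matrix (Fin n) (Fin n) ℝ}
    (hP : P ∈ rowStochastic ℝ (Fin n)) (hpi : ∀ i, 0 ≤ pi i)
    (hstat : ∀ j, ∑ i, pi i * P i j = pi j) (x : Fin n → ℝ) :
    normD pi (P *ᵥ x) ≤ normD pi x := by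
  have jensen (i : Fin n) : (P *ᵥ x) i ^ 2 ≤ ∑ j, P i j * x j ^ 2 :=
    (even_two.convexOn_pow).map_sum_le (p := x) (fun j _ => nonneg_of_mem_rowStochastic hP)
      (sum_row_of_mem_rowStochastic hP i) (fun j _ => Set.mem_univ _)
  refine Real.sqrt_le_sqrt ?_
  calc ∑ i, pi i * (P *ᵥ x) i ^ 2 ≤ ∑ i, pi i * ∑ j, P i j * x j ^ 2 :=
        Finset.sum_le_sum fun i _ => mul_le_mul_of_nonneg_left (jensen i) (hpi i)
    _ = ∑ j, (∑ i, pi i * P i j) * x j ^ 2 := by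
        simp only [Finset.mul_sum, Finset.sum_mul, mul_assoc]
        exact Finset.sum_comm
    _ = ∑ j, pi j * x j ^ 2 := by simp only [hstat]

end WeightedNorm

theorem norm_add_le_div_sqrt_of_inner_eq_zero {E : Type*} [NormedAddCommGroup E]
    [InnerProductSpace ℝ E] {a w : E} {β : ℝ} (horth : inner ℝ a w = 0)
    (ha : ‖a‖ ≤ β * ‖a + w‖) (hβ : β ^ 2 < 1) : ‖a + w‖ ≤ ‖w‖ / √(1 - β ^ 2) := by
  have hpyth := norm_add_sq_eq_norm_sq_add_norm_sq_real horth
  have hsq : (1 - β ^ 2) * ‖a + w‖ ^ 2 ≤ ‖w‖ ^ 2 := by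
    nlinarith [mul_self_le_mul_self (norm_nonneg a) ha]
  rw [le_div_iff₀ (Real.sqrt_pos.2 (sub_pos.2 hβ))]
  calc ‖a + w‖ * √(1 - β ^ 2) = √((1 - β ^ 2) * ‖a + w‖ ^ 2) := by
        rw [Real.sqrt_mul' _ (sq_nonneg _), Real.sqrt_sq (norm_nonneg _), mul_comm]
    _ ≤ √(‖w‖ ^ 2) := Real.sqrt_le_sqrt hsq
    _ = ‖w‖ := Real.sqrt_sq (norm_nonneg _)

section WeightedProjection

variable {n K : ℕ} (Φ : Matrix (Fin n) (Fin K) ℝ) (pi : Fin n → ℝ)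

noncomputable def weightedProjection : Matrix (Fin n) (Fin n) ℝ :=
  Φ * (Φᵀ * diagonal pi * Φ)⁻¹ * Φᵀ * diagonal pi

variable {Φ pi}

theorem isUnit_det_transpose_mul_diagonal_mul (hpi : ∀ i, 0 < pi i)
    (hΦ : LinearIndependent ℝ Φ.col) : IsUnit (Φᵀ * diagonal pi * Φ).det := by
  rw [← isUnit_iff_isUnit_det]
  simpa [conjTranspose_eq_transpose_of_trivial] using
    ((posDef_diagonal_iff.2 hpi).conjTranspose_mul_mul_same (mulVec_injective_iff.2 hΦ)).isUnit

theorem weightedProjection_mulVec (z : Fin n → ℝ) :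
    weightedProjection Φ pi *ᵥ z =
      Φ *ᵥ ((Φᵀ * diagonal pi * Φ)⁻¹ *ᵥ ((Φᵀ * diagonal pi) *ᵥ z)) := by
  simp only [weightedProjection, mulVec_mulVec, Matrix.mul_assoc]

theorem weightedProjection_mulVec_eq_of_mulVec_sub_eq_zero
    (hG : IsUnit (Φᵀ * diagonal pi * Φ).det) {y : Fin n → ℝ} {r : Fin K → ℝ}
    (h : (Φᵀ * diagonal pi) *ᵥ (y - Φ *ᵥ r) = 0) : weightedProjection Φ pi *ᵥ y = Φ *ᵥ r := by
  rw [mulVec_sub, sub_eq_zero, mulVec_mulVec] at h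
  rw [weightedProjection_mulVec, h, mulVec_mulVec _ (Φᵀ * diagonal pi * Φ)⁻¹,
    nonsing_inv_mul _ hG, one_mulVec]

theorem mulVec_weightedProjection_sub_one_mulVec (hG : IsUnit (Φᵀ * diagonal pi * Φ).det)
    (z : Fin n → ℝ) : (Φᵀ * diagonal pi) *ᵥ ((weightedProjection Φ pi - 1) *ᵥ z) = 0 := by
  have : Φᵀ * diagonal pi * weightedProjection Φ pi = Φᵀ * diagonal pi := by
    calc Φᵀ * diagonal pi * weightedProjection Φ pi
        = (Φᵀ * diagonal pi * Φ) * (Φᵀ * diagonal pi * Φ)⁻¹ * (Φᵀ * diagonal pi) := by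
          simp only [weightedProjection, Matrix.mul_assoc]
      _ = Φᵀ * diagonal pi := by rw [mul_nonsing_inv _ hG, Matrix.one_mul]
  rw [mulVec_mulVec, Matrix.mul_sub, this, Matrix.mul_one, sub_self, zero_mulVec]

theorem inner_weightedEmbedding_weightedProjection_eq_zero (hpi : ∀ i, 0 ≤ pi i)
    (z : Fin n → ℝ) {w : Fin n → ℝ} (hw : (Φᵀ * diagonal pi) *ᵥ w = 0) :
    inner ℝ (weightedEmbedding pi (weightedProjection Φ pi *ᵥ z)) (weightedEmbedding pi w) = 0 := by
  rw [inner_weightedEmbedding hpi, weightedProjection_mulVec, ← vecMul_transpose,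
    ← dotProduct_mulVec, mulVec_mulVec w Φᵀ, hw, dotProduct_zero]

theorem normD_weightedProjection_mulVec_le (hpi : ∀ i, 0 ≤ pi i)
    (hG : IsUnit (Φᵀ * diagonal pi * Φ).det) (z : Fin n → ℝ) :
    normD pi (weightedProjection Φ pi *ᵥ z) ≤ normD pi z := by
  have horth := inner_weightedEmbedding_weightedProjection_eq_zero hpi z
    (mulVec_weightedProjection_sub_one_mulVec hG z)
  have hpyth := norm_sub_sq_eq_norm_sq_add_norm_sq_real horth
  rw [← map_sub, sub_mulVec, one_mulVec, sub_sub_cancel] at hpyth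
  simp only [normD_eq_norm_weightedEmbedding hpi]
  exact (mul_self_le_mul_self_iff (norm_nonneg _) (norm_nonneg _)).2
    (hpyth ▸ le_add_of_nonneg_right (mul_self_nonneg _))

end WeightedProjection

noncomputable def lambdaContraction (α lam : ℝ) : ℝ := (1 - lam) * α / (1 - α * lam)

section LambdaContraction

variable {α lam : ℝ}

theorem lambdaContraction_nonneg (hα0 : 0 ≤ α) (hlam1 : lam ≤ 1) (hαlam : α * lam < 1) :
    0 ≤ lambdaContraction α lam :=
  div_nonneg (mul_nonneg (sub_nonneg.2 hlam1) hα0) (sub_pos.2 hαlam).le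

theorem lambdaContraction_lt_one (hα1 : α < 1) (hαlam : α * lam < 1) :
    lambdaContraction α lam < 1 := by
  rw [lambdaContraction, div_lt_one (by linarith)]
  linarith

theorem one_sub_mul_one_sub_lambdaContraction (hαlam : α * lam < 1) :
    (1 - α * lam) * (1 - lambdaContraction α lam) = 1 - α := by
  have : 1 - α * lam ≠ 0 := by linarith
  rw [lambdaContraction]
  field_simp
  ring

theorem div_sqrt_one_sub_lambdaContraction_sq (hαlam : α * lam < 1) (x : ℝ) :
    x / √(1 - lambdaContraction α lam ^ 2) =
      (1 - lam * α) / √((1 - α) * (1 + α - 2 * lam * α)) * x := by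
  have h : 0 < 1 - lam * α := by linarith
  rw [lambdaContraction, show 1 - ((1 - lam) * α / (1 - α * lam)) ^ 2 =
      (1 - α) * (1 + α - 2 * lam * α) / (1 - lam * α) ^ 2 by field_simp; ring,
    Real.sqrt_div' _ (sq_nonneg _), Real.sqrt_sq h.le, div_div_eq_mul_div, div_mul_eq_mul_div,
    mul_comm x]

end LambdaContraction

section LambdaMatrix

variable {n : ℕ} {P : Matrix (Fin n) (Fin n) ℝ} {pi : Fin n → ℝ} {α lam c : ℝ}

noncomputable def lambdaMatrix (P : Matrix (Fin n) (Fin n) ℝ) (α lam : ℝ) :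
    Matrix (Fin n) (Fin n) ℝ :=
  (1 - lam) • ∑' m : ℕ, (lam ^ m * α ^ (m + 1)) • P ^ (m + 1)

theorem normD_geomSeries_mulVec_le (hP : P ∈ rowStochastic ℝ (Fin n))
    (hpi : ∀ i, 0 ≤ pi i) (hstat : ∀ j, ∑ i, pi i * P i j = pi j) (hc0 : 0 ≤ c) (hc1 : c < 1)
    (x : Fin n → ℝ) : normD pi (geomSeries P c *ᵥ x) ≤ normD pi x / (1 - c) := by
  set S := geomSeries P c
  have hS : S = 1 + c • (P * S) := by
    have h := one_sub_smul_mul_geomSeries hP hc0 hc1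
    rwa [Matrix.sub_mul, Matrix.one_mul, Matrix.smul_mul, sub_eq_iff_eq_add] at h
  have hSx : S *ᵥ x = x + c • (P *ᵥ (S *ᵥ x)) := by
    conv_lhs => rw [hS]
    rw [add_mulVec, one_mulVec, smul_mulVec, mulVec_mulVec]
  have hle : normD pi (S *ᵥ x) ≤ normD pi x + c * normD pi (S *ᵥ x) := by
    calc normD pi (S *ᵥ x) = normD pi (x + c • (P *ᵥ (S *ᵥ x))) := congrArg _ hSx
      _ ≤ normD pi x + normD pi (c • (P *ᵥ (S *ᵥ x))) := normD_add_le hpi _ _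
      _ = normD pi x + c * normD pi (P *ᵥ (S *ᵥ x)) := by rw [normD_smul hpi, abs_of_nonneg hc0]
      _ ≤ normD pi x + c * normD pi (S *ᵥ x) := by
          gcongr
          exact normD_mulVec_le_of_mem_rowStochastic hP hpi hstat _
  rw [le_div_iff₀ (sub_pos.2 hc1)]
  linarith

theorem lambdaMatrix_eq (hP : P ∈ rowStochastic ℝ (Fin n)) (hα0 : 0 ≤ α) (hα1 : α < 1)
    (hlam0 : 0 ≤ lam) (hlam1 : lam ≤ 1) :
    lambdaMatrix P α lam = ((1 - lam) * α) • (geomSeries P (α * lam) * P) := by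
  rw [lambdaMatrix, tsum_pow_mul_pow_succ_smul_pow_succ
    (summable_smul_pow_of_mem_rowStochastic hP (mul_nonneg hα0 hlam0)
      (mul_lt_one_of_nonneg_of_lt_one_left hα0 hα1 hlam1)), smul_smul]

theorem normD_lambdaMatrix_mulVec_le (hP : P ∈ rowStochastic ℝ (Fin n)) (hpi : ∀ i, 0 ≤ pi i)
    (hstat : ∀ j, ∑ i, pi i * P i j = pi j) (hα0 : 0 ≤ α) (hα1 : α < 1) (hlam0 : 0 ≤ lam)
    (hlam1 : lam ≤ 1) (x : Fin n → ℝ) :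
    normD pi (lambdaMatrix P α lam *ᵥ x) ≤ lambdaContraction α lam * normD pi x := by
  have hαlam1 := mul_lt_one_of_nonneg_of_lt_one_left hα0 hα1 hlam1
  rw [lambdaMatrix_eq hP hα0 hα1 hlam0 hlam1, smul_mulVec, normD_smul hpi,
    abs_of_nonneg (mul_nonneg (sub_nonneg.2 hlam1) hα0), ← mulVec_mulVec, lambdaContraction,
    mul_comm_div]
  gcongr
  exact (normD_geomSeries_mulVec_le hP hpi hstat (mul_nonneg hα0 hlam0) hαlam1 _).trans
    (by gcongr; exact normD_mulVec_le_of_mem_rowStochastic hP hpi hstat x)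

theorem lambdaMatrix_mulVec_add_geomSeries_mulVec (hP : P ∈ rowStochastic ℝ (Fin n))
    (hα0 : 0 ≤ α) (hα1 : α < 1) (hlam0 : 0 ≤ lam) (hlam1 : lam ≤ 1) {J g : Fin n → ℝ}
    (hJ : (1 - α • P) *ᵥ J = g) :
    lambdaMatrix P α lam *ᵥ J + geomSeries P (α * lam) *ᵥ g = J := by
  have hS := geomSeries_mul_one_sub_smul hP (mul_nonneg hα0 hlam0)
    (mul_lt_one_of_nonneg_of_lt_one_left hα0 hα1 hlam1)
  rw [← hJ, mulVec_mulVec, ← add_mulVec, lambdaMatrix_eq hP hα0 hα1 hlam0 hlam1,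
    smul_mul_add_mul_one_sub_smul hS, one_mulVec]

end LambdaMatrix

section ProjectedFixedPoint

variable {n K : ℕ} {Φ : Matrix (Fin n) (Fin K) ℝ} {pi : Fin n → ℝ}
  {M : Matrix (Fin n) (Fin n) ℝ} {β : ℝ}

theorem weightedProjection_mulVec_add_eq_of_mulVec_add_eq_zero
    (hG : IsUnit (Φᵀ * diagonal pi * Φ).det) {S : Matrix (Fin n) (Fin n) ℝ} {r : Fin K → ℝ}
    {c : Fin n → ℝ} (h : (Φᵀ * diagonal pi * (M - 1) * Φ) *ᵥ r + (Φᵀ * diagonal pi * S) *ᵥ c = 0) :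
    weightedProjection Φ pi *ᵥ (M *ᵥ (Φ *ᵥ r) + S *ᵥ c) = Φ *ᵥ r := by
  refine weightedProjection_mulVec_eq_of_mulVec_sub_eq_zero hG ?_
  rw [← h]
  simp only [← mulVec_mulVec, mulVec_add, mulVec_sub, sub_mulVec, one_mulVec]
  abel

theorem normD_sub_le_div_one_sub_of_projected_fixed (hpi : ∀ i, 0 ≤ pi i)
    (hG : IsUnit (Φᵀ * diagonal pi * Φ).det) (hM : ∀ x, normD pi (M *ᵥ x) ≤ β * normD pi x)
    (hβ : β < 1) {u u' y y' : Fin n → ℝ} (hu : weightedProjection Φ pi *ᵥ (M *ᵥ u + y) = u)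
    (hu' : weightedProjection Φ pi *ᵥ (M *ᵥ u' + y') = u') :
    normD pi (u' - u) ≤ normD pi (y' - y) / (1 - β) := by
  have he : u' - u = weightedProjection Φ pi *ᵥ (M *ᵥ (u' - u) + (y' - y)) := by
    calc u' - u = weightedProjection Φ pi *ᵥ (M *ᵥ u' + y')
          - weightedProjection Φ pi *ᵥ (M *ᵥ u + y) := by rw [hu, hu']
      _ = _ := by rw [← mulVec_sub, mulVec_sub M]; congr 1; abel
  have hle : normD pi (u' - u) ≤ β * normD pi (u' - u) + normD pi (y' - y) := by
    calc normD pi (u' - u) ≤ normD pi (M *ᵥ (u' - u) + (y' - y)) := by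
          conv_lhs => rw [he]
          exact normD_weightedProjection_mulVec_le hpi hG _
      _ ≤ normD pi (M *ᵥ (u' - u)) + normD pi (y' - y) := normD_add_le hpi _ _
      _ ≤ β * normD pi (u' - u) + normD pi (y' - y) := by gcongr; exact hM _
  rw [le_div_iff₀ (sub_pos.2 hβ)]
  linarith

theorem normD_sub_le_div_sqrt_of_projected_fixed (hpi : ∀ i, 0 ≤ pi i)
    (hG : IsUnit (Φᵀ * diagonal pi * Φ).det) (hM : ∀ x, normD pi (M *ᵥ x) ≤ β * normD pi x)
    (hβ : β ^ 2 < 1) {u y J : Fin n → ℝ} (hu : weightedProjection Φ pi *ᵥ (M *ᵥ u + y) = u)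
    (hJ : M *ᵥ J + y = J) :
    normD pi (u - J) ≤ normD pi ((weightedProjection Φ pi - 1) *ᵥ J) / √(1 - β ^ 2) := by
  set a := weightedProjection Φ pi *ᵥ (M *ᵥ (u - J))
  have ha : a = u - weightedProjection Φ pi *ᵥ J := by
    calc a = weightedProjection Φ pi *ᵥ (M *ᵥ u + y)
          - weightedProjection Φ pi *ᵥ (M *ᵥ J + y) := by
          rw [← mulVec_sub, add_sub_add_right_eq_sub, ← mulVec_sub]
      _ = u - weightedProjection Φ pi *ᵥ J := by rw [hu, hJ]
  have hdecomp : u - J = a + (weightedProjection Φ pi - 1) *ᵥ J := by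
    rw [ha, sub_mulVec, one_mulVec]
    abel
  have horth := inner_weightedEmbedding_weightedProjection_eq_zero hpi (M *ᵥ (u - J))
    (mulVec_weightedProjection_sub_one_mulVec hG J)
  have hab : normD pi a ≤ β * normD pi (u - J) :=
    (normD_weightedProjection_mulVec_le hpi hG _).trans (hM _)
  rw [hdecomp] at hab ⊢
  simp only [normD_eq_norm_weightedEmbedding hpi, map_add] at hab ⊢
  exact norm_add_le_div_sqrt_of_inner_eq_zero horth hab hβ

end ProjectedFixedPoint

section LambdaBounds

variable {n K : ℕ} {P : Matrix (Fin n) (Fin n) ℝ} {pi : Fin n → ℝ}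
  {Φ : Matrix (Fin n) (Fin K) ℝ} {α lam : ℝ}

theorem normD_sub_le_of_projected_lambda_fixed (hP : P ∈ rowStochastic ℝ (Fin n))
    (hpi : ∀ i, 0 ≤ pi i) (hstat : ∀ j, ∑ i, pi i * P i j = pi j)
    (hG : IsUnit (Φᵀ * diagonal pi * Φ).det) (hα0 : 0 ≤ α) (hα1 : α < 1) (hlam0 : 0 ≤ lam)
    (hlam1 : lam ≤ 1) {u u' g g' : Fin n → ℝ}
    (hu : weightedProjection Φ pi *ᵥ
      (lambdaMatrix P α lam *ᵥ u + geomSeries P (α * lam) *ᵥ g) = u)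
    (hu' : weightedProjection Φ pi *ᵥ
      (lambdaMatrix P α lam *ᵥ u' + geomSeries P (α * lam) *ᵥ g') = u') :
    normD pi (u' - u) ≤ 1 / (1 - α) * normD pi (g' - g) := by
  have hαlam1 := mul_lt_one_of_nonneg_of_lt_one_left hα0 hα1 hlam1
  calc normD pi (u' - u)
      ≤ normD pi (geomSeries P (α * lam) *ᵥ g' - geomSeries P (α * lam) *ᵥ g)
          / (1 - lambdaContraction α lam) :=
        normD_sub_le_div_one_sub_of_projected_fixed hpi hG
          (normD_lambdaMatrix_mulVec_le hP hpi hstat hα0 hα1 hlam0 hlam1)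
          (lambdaContraction_lt_one hα1 hαlam1) hu hu'
    _ ≤ normD pi (g' - g) / (1 - α * lam) / (1 - lambdaContraction α lam) := by
        gcongr
        · exact sub_nonneg.2 (lambdaContraction_lt_one hα1 hαlam1).le
        rw [← mulVec_sub]
        exact normD_geomSeries_mulVec_le hP hpi hstat (mul_nonneg hα0 hlam0) hαlam1 _
    _ = 1 / (1 - α) * normD pi (g' - g) := by
        rw [div_div, one_sub_mul_one_sub_lambdaContraction hαlam1, one_div_mul_eq_div]

theorem normD_sub_le_of_projected_lambda_fixed_of_bellman (hP : P ∈ rowStochastic ℝ (Fin n))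
    (hpi : ∀ i, 0 ≤ pi i) (hstat : ∀ j, ∑ i, pi i * P i j = pi j)
    (hG : IsUnit (Φᵀ * diagonal pi * Φ).det) (hα0 : 0 ≤ α) (hα1 : α < 1) (hlam0 : 0 ≤ lam)
    (hlam1 : lam ≤ 1) {u g J : Fin n → ℝ}
    (hu : weightedProjection Φ pi *ᵥ
      (lambdaMatrix P α lam *ᵥ u + geomSeries P (α * lam) *ᵥ g) = u)
    (hJ : (1 - α • P) *ᵥ J = g) :
    normD pi (u - J) ≤ (1 - lam * α) / √((1 - α) * (1 + α - 2 * lam * α)) *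
      normD pi ((weightedProjection Φ pi - 1) *ᵥ J) := by
  have hαlam1 := mul_lt_one_of_nonneg_of_lt_one_left hα0 hα1 hlam1
  have hβ : lambdaContraction α lam ^ 2 < 1 :=
    pow_lt_one₀ (lambdaContraction_nonneg hα0 hlam1 hαlam1) (lambdaContraction_lt_one hα1 hαlam1)
      two_ne_zero
  rw [← div_sqrt_one_sub_lambdaContraction_sq hαlam1]
  exact normD_sub_le_div_sqrt_of_projected_fixed hpi hG
    (normD_lambdaMatrix_mulVec_le hP hpi hstat hα0 hα1 hlam0 hlam1) hβ hu
    (lambdaMatrix_mulVec_add_geomSeries_mulVec hP hα0 hα1 hlam0 hlam1 hJ)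

end LambdaBounds

theorem TD_total_approximation_error_bound_general
    {n K : ℕ} (P : Matrix (Fin n) (Fin n) ℝ)
    (hP0 : ∀ i j, 0 ≤ P i j) (hP1 : ∀ i, ∑ j, P i j = 1)
    (pi : Fin n → ℝ) (hpi0 : ∀ i, 0 < pi i)
    (hstat : ∀ j, ∑ i, pi i * P i j = pi j)
    (α lam : ℝ) (hα0 : 0 < α) (hα1 : α < 1) (hlam0 : 0 ≤ lam) (hlam1 : lam < 1)
    (Φ : Matrix (Fin n) (Fin K) ℝ)
    (hΦ : LinearIndependent ℝ (fun k : Fin K => fun i : Fin n => Φ i k))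
    (D : Matrix (Fin n) (Fin n) ℝ) (hD : D = Matrix.diagonal pi)
    (M : Matrix (Fin n) (Fin n) ℝ)
    (hM : M = (1 - lam) • ∑' m : ℕ, (lam ^ m * α ^ (m + 1)) • P ^ (m + 1))
    (A : Matrix (Fin K) (Fin K) ℝ) (hA : A = Φᵀ * D * (M - 1) * Φ)
    (b : (Fin n → ℝ) → (Fin K → ℝ))
    (hb : ∀ c, b c = (Φᵀ * D * ∑' m : ℕ, (α * lam) ^ m • P ^ m).mulVec c)
    (Pr : Matrix (Fin n) (Fin n) ℝ) (hPr : Pr = Φ * (Φᵀ * D * Φ)⁻¹ * Φᵀ * D)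
    (gbar gt η : Fin n → ℝ) (hη : η = gt - gbar)
    (Jμ : Fin n → ℝ) (hJμ : Jμ = ((1 - α • P)⁻¹).mulVec gbar)
    (rstar rtstar : Fin K → ℝ)
    (hrstar : A.mulVec rstar + b gbar = 0)
    (hrtstar : A.mulVec rtstar + b gt = 0) :
    normD pi (Φ.mulVec rtstar - Jμ) ≤
      (1 / (1 - α)) * normD pi η +
        ((1 - lam * α) / Real.sqrt ((1 - α) * (1 + α - 2 * lam * α))) *
          normD pi ((Pr - 1).mulVec Jμ) := by
  subst hD hA hη
  obtain rfl : Pr = weightedProjection Φ pi := hPr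
  obtain rfl : M = lambdaMatrix P α lam := hM
  have hP : P ∈ rowStochastic ℝ (Fin n) := mem_rowStochastic_iff_sum.2 ⟨hP0, hP1⟩
  have hpi : ∀ i, 0 ≤ pi i := fun i => (hpi0 i).le
  have hG := isUnit_det_transpose_mul_diagonal_mul hpi0 hΦ
  rw [hb] at hrstar hrtstar
  have hfix := weightedProjection_mulVec_add_eq_of_mulVec_add_eq_zero hG hrstar
  have hJ : (1 - α • P) *ᵥ Jμ = gbar := by
    rw [hJμ, inv_eq_right_inv (one_sub_smul_mul_geomSeries hP hα0.le hα1), mulVec_mulVec,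
      one_sub_smul_mul_geomSeries hP hα0.le hα1, one_mulVec]
  have hcost := normD_sub_le_of_projected_lambda_fixed hP hpi hstat hG hα0.le hα1 hlam0 hlam1.le
    hfix (weightedProjection_mulVec_add_eq_of_mulVec_add_eq_zero hG hrtstar)
  have happrox := normD_sub_le_of_projected_lambda_fixed_of_bellman hP hpi hstat hG hα0.le hα1
    hlam0 hlam1.le hfix hJ
  calc normD pi (Φ *ᵥ rtstar - Jμ)
      = normD pi ((Φ *ᵥ rtstar - Φ *ᵥ rstar) + (Φ *ᵥ rstar - Jμ)) := by
        rw [sub_add_sub_cancel]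
    _ ≤ _ := (normD_add_le hpi _ _).trans (add_le_add hcost happrox)

/-- Total approximation error of TD(λ) under bounded cost manipulation: with
`M = (1−λ)∑ λ^m α^{m+1} P^{m+1}`, `A = Φᵀ D (M − I) Φ`, `b(c) = Φᵀ D ∑ (αλ)^m P^m c`,
`Π = Φ(Φᵀ D Φ)⁻¹ Φᵀ D`, `J^μ = (I − αP)⁻¹ ḡ` and `η = g̃ − ḡ`, if `A r* + b(ḡ) = 0` and
`A r̃* + b(g̃) = 0` then
`‖Φ r̃* − J^μ‖_D ≤ (1/(1−α))‖η‖_D + ((1−λα)/√((1−α)(1+α−2λα))) ‖(Π − I) J^μ‖_D`. -/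
theorem TD_total_approximation_error_bound
    {n K : ℕ} (P : Matrix (Fin n) (Fin n) ℝ)
    (hP0 : ∀ i j, 0 ≤ P i j) (hP1 : ∀ i, ∑ j, P i j = 1)
    (pi : Fin n → ℝ) (hpi0 : ∀ i, 0 < pi i) (hpi1 : ∑ i, pi i = 1)
    (hstat : ∀ j, ∑ i, pi i * P i j = pi j)
    (α lam : ℝ) (hα0 : 0 < α) (hα1 : α < 1) (hlam0 : 0 ≤ lam) (hlam1 : lam < 1)
    (Φ : Matrix (Fin n) (Fin K) ℝ)
    (hΦ : LinearIndependent ℝ (fun k : Fin K => fun i : Fin n => Φ i k))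
    (D : Matrix (Fin n) (Fin n) ℝ) (hD : D = Matrix.diagonal pi)
    (M : Matrix (Fin n) (Fin n) ℝ)
    (hM : M = (1 - lam) • ∑' m : ℕ, (lam ^ m * α ^ (m + 1)) • P ^ (m + 1))
    (A : Matrix (Fin K) (Fin K) ℝ) (hA : A = Φᵀ * D * (M - 1) * Φ)
    (b : (Fin n → ℝ) → (Fin K → ℝ))
    (hb : ∀ c, b c = (Φᵀ * D * ∑' m : ℕ, (α * lam) ^ m • P ^ m).mulVec c)
    (Pr : Matrix (Fin n) (Fin n) ℝ) (hPr : Pr = Φ * (Φᵀ * D * Φ)⁻¹ * Φᵀ * D)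
    (gbar gt η : Fin n → ℝ) (hη : η = gt - gbar)
    (Jμ : Fin n → ℝ) (hJμ : Jμ = ((1 - α • P)⁻¹).mulVec gbar)
    (rstar rtstar : Fin K → ℝ)
    (hrstar : A.mulVec rstar + b gbar = 0)
    (hrtstar : A.mulVec rtstar + b gt = 0) :
    normD pi (Φ.mulVec rtstar - Jμ) ≤
      (1 / (1 - α)) * normD pi η +
        ((1 - lam * α) / Real.sqrt ((1 - α) * (1 + α - 2 * lam * α))) *
          normD pi ((Pr - 1).mulVec Jμ) :=
  TD_total_approximation_error_bound_general P hP0 hP1 pi hpi0 hstat α lam hα0 hα1 hlam0 hlam1 Φ hΦ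
    D hD M hM A hA b hb Pr hPr gbar gt η hη Jμ hJμ rstar rtstar hrstar hrtstar
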